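/- arXiv:2104.07432 — 5 statements merged into one kernel-verified Lean document; each statement's English description precedes it below -/
import Mathlib

section
/- Let C be a Hermitian LCD [n,k] code over F_{q^2} with k ≥ 1. Then C has a generator matrix whose first row x satisfies (x,x)_h ≠ 0 and x is Hermitian-orthogonal to all remaining rows; moreover, the code generated by the remaining k−1 rows is a Hermitian LCD [n,k−1] code. -/
open Finset Matrix

/-- The Hermitian inner product `(x, y)_h = ∑ i, x i * (y i)^q` on `F^n`. -/
def hermInner {F : Type*} [Field F] (q : ℕ) {n : ℕ} (x y : Fin n → F) : F :=
  ∑ i, x i * (y i) ^ q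

/-- The Hermitian dual code `C^{⊥h}`. -/
def hermDual {F : Type*} [Field F] (q : ℕ) {n : ℕ} (C : Submodule F (Fin n → F)) :
    Submodule F (Fin n → F) where
  carrier := {x | ∀ y ∈ C, hermInner q x y = 0}
  add_mem' := by
    intro a b ha hb y hy
    have h1 := ha y hy
    have h2 := hb y hy
    simp only [hermInner] at *
    rw [show (∑ i, (a + b) i * y i ^ q)
        = (∑ i, a i * y i ^ q) + ∑ i, b i * y i ^ q by
      rw [← Finset.sum_add_distrib]
      exact Finset.sum_congr rfl fun i _ => by simp [add_mul]]
    rw [h1, h2, add_zero]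
  zero_mem' := by
    intro y hy
    simp [hermInner]
  smul_mem' := by
    intro c a ha y hy
    have h1 := ha y hy
    simp only [hermInner] at *
    rw [show (∑ i, (c • a) i * y i ^ q) = c * ∑ i, a i * y i ^ q by
      rw [Finset.mul_sum]
      exact Finset.sum_congr rfl fun i _ => by simp [mul_assoc]]
    rw [h1, mul_zero]

/-- A code is Hermitian LCD if `C ∩ C^{⊥h} = {0}`. -/
def IsHermLCD {F : Type*} [Field F] (q : ℕ) {n : ℕ} (C : Submodule F (Fin n → F)) : Prop :=
  C ⊓ hermDual q C = ⊥

/-- Hamming weight: number of nonzero coordinates. -/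
noncomputable def wt {F : Type*} [Field F] {n : ℕ} (x : Fin n → F) : ℕ :=
  Nat.card {i // x i ≠ 0}

/-- `C` has minimum weight `d`. -/
def minWt {F : Type*} [Field F] {n : ℕ} (C : Submodule F (Fin n → F)) (d : ℕ) : Prop :=
  (∃ c ∈ C, c ≠ 0 ∧ wt c = d) ∧ ∀ c ∈ C, c ≠ 0 → d ≤ wt c

/-- The Hermitian dual distance of `C` is at least 2. -/
def dualDistGeTwo {F : Type*} [Field F] (q : ℕ) {n : ℕ} (C : Submodule F (Fin n → F)) : Prop :=
  ∀ x ∈ hermDual q C, x ≠ 0 → 2 ≤ wt x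

/-- The Hermitian dual distance of `C` equals 1, i.e. `C^{⊥h}` contains a weight-one
vector. -/
def dualDistOne {F : Type*} [Field F] (q : ℕ) {n : ℕ} (C : Submodule F (Fin n → F)) : Prop :=
  ∃ x ∈ hermDual q C, wt x = 1


/-!
Over `F_{q^2}` the map `z ↦ z^q` is an involutive field automorphism, so `(·,·)_h` is a
Hermitian form. If every vector of `C` were isotropic, polarization would give
`(μ z + y, μ z + y)_h = t + t^q` with `t = μ (z, y)_h`, and since `t ↦ t + t^q` is not identically
zero (a polynomial of degree `q < q^2`), all of `C` would be orthogonal to itself, contradicting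
LCD. So `C` contains a non-isotropic `x`, and `C` splits as `⟨x⟩ ⊕ D` with
`D = {y ∈ C | (y, x)_h = 0}`; a vector of `D ∩ D^{⊥h}` is orthogonal to `x` and to `D`, hence to
`C`, so `D` is again LCD. The generator matrix is `x` followed by a basis of `D`.
-/

open Polynomial

lemma IsPrimePow.exists_eq_ringExpChar_pow {F : Type*} [Field F] [Fintype F] {q : ℕ}
    (hq : IsPrimePow q) (hdvd : q ∣ Fintype.card F) : ∃ j, q = ringExpChar F ^ j := by
  obtain ⟨p, j, hp, hj, rfl⟩ := (isPrimePow_nat_iff q).1 hq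
  obtain ⟨m, hr, hcard⟩ := FiniteField.card F (ringChar F)
  have : ExpChar F (ringChar F) := ExpChar.prime hr
  have hpr : p = ringChar F := (Nat.prime_dvd_prime_iff_eq hp hr).1 <|
    hp.dvd_of_dvd_pow <| hcard ▸ (dvd_pow_self p hj.ne').trans hdvd
  exact ⟨j, by rw [ringExpChar.eq F (ringChar F), hpr]⟩

lemma FiniteField.pow_pow_of_card_eq_sq {F : Type*} [Field F] [Fintype F] {q : ℕ}
    (hcard : Fintype.card F = q ^ 2) (z : F) : (z ^ q) ^ q = z := by
  rw [← pow_mul, ← sq, ← hcard, FiniteField.pow_card]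

lemma exists_add_pow_ne_zero {F : Type*} [Field F] [Fintype F] {q : ℕ} (hq : 1 < q)
    (hcard : q < Fintype.card F) : ∃ t : F, t + t ^ q ≠ 0 := by
  by_contra! h
  have hdeg : (X ^ q + X : F[X]).natDegree = q := by
    rw [natDegree_add_eq_left_of_natDegree_lt] <;> simp [hq]
  have hzero : (X ^ q + X : F[X]) = 0 :=
    eq_zero_of_natDegree_lt_card_of_eval_eq_zero _ Function.injective_id
      (fun t => by simpa [add_comm] using h t) (by rwa [hdeg])
  simpa [coeff_X_pow, hq.ne] using congrArg (coeff · 1) hzero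

lemma Submodule.exists_linearIndependent_span_eq {K V : Type*} [DivisionRing K] [AddCommGroup V]
    [Module K V] {W : Submodule K V} [FiniteDimensional K W] {k : ℕ}
    (h : Module.finrank K W = k) :
    ∃ v : Fin k → V, LinearIndependent K v ∧ span K (Set.range v) = W := by
  let b := Module.finBasisOfFinrankEq K W h
  refine ⟨W.subtype ∘ b, b.linearIndependent.map' _ W.ker_subtype, ?_⟩
  rw [Set.range_comp, span_image, b.span_eq, map_top, range_subtype]

section HermInner

variable {F : Type*} [Field F] {n : ℕ}

lemma hermInner_add_left (q : ℕ) (x y z : Fin n → F) :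
    hermInner q (x + y) z = hermInner q x z + hermInner q y z := by
  simp [hermInner, add_mul, sum_add_distrib]

lemma hermInner_smul_left (q : ℕ) (c : F) (x y : Fin n → F) :
    hermInner q (c • x) y = c * hermInner q x y := by
  simp [hermInner, mul_sum, mul_assoc]

lemma hermInner_smul_right (q : ℕ) (c : F) (x y : Fin n → F) :
    hermInner q x (c • y) = c ^ q * hermInner q x y := by
  simp only [hermInner, Pi.smul_apply, smul_eq_mul, mul_sum, mul_pow]
  exact sum_congr rfl fun i _ => by ring

def hermInnerLinear (q : ℕ) (x : Fin n → F) : (Fin n → F) →ₗ[F] F where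
  toFun y := hermInner q y x
  map_add' y z := hermInner_add_left q y z x
  map_smul' c y := hermInner_smul_left q c y x

variable {p : ℕ} [ExpChar F p] {j : ℕ}

lemma hermInner_add_right (x y z : Fin n → F) :
    hermInner (p ^ j) x (y + z) = hermInner (p ^ j) x y + hermInner (p ^ j) x z := by
  simp [hermInner, add_pow_expChar_pow, mul_add, sum_add_distrib]

lemma hermInner_swap (hσ : ∀ z : F, (z ^ p ^ j) ^ p ^ j = z) (x y : Fin n → F) :
    hermInner (p ^ j) y x = hermInner (p ^ j) x y ^ p ^ j := by
  have hsum := map_sum (iterateFrobenius F p j) (fun i => x i * y i ^ p ^ j) univ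
  simp only [iterateFrobenius_def, mul_pow, hσ] at hsum
  simp only [hermInner, hsum, mul_comm]

lemma hermInner_add_add_self (hσ : ∀ z : F, (z ^ p ^ j) ^ p ^ j = z) (x y : Fin n → F) :
    hermInner (p ^ j) (x + y) (x + y) = hermInner (p ^ j) x x + hermInner (p ^ j) y y +
      (hermInner (p ^ j) x y + hermInner (p ^ j) x y ^ p ^ j) := by
  rw [hermInner_add_left, hermInner_add_right, hermInner_add_right, hermInner_swap hσ x y]
  ring

lemma IsHermLCD.exists_hermInner_self_ne_zero (hσ : ∀ z : F, (z ^ p ^ j) ^ p ^ j = z)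
    (htr : ∃ t : F, t + t ^ p ^ j ≠ 0) {C : Submodule F (Fin n → F)}
    (hlcd : IsHermLCD (p ^ j) C) (hC : C ≠ ⊥) : ∃ x ∈ C, hermInner (p ^ j) x x ≠ 0 := by
  by_contra! hiso
  obtain ⟨t, ht⟩ := htr
  have hself : C ≤ hermDual (p ^ j) C := by
    intro z hz y hy
    by_contra ha
    have hμ : (t / hermInner (p ^ j) z y) • z + y ∈ C := C.add_mem (C.smul_mem _ hz) hy
    apply ht
    rw [← hiso _ hμ, hermInner_add_add_self hσ]
    simp only [hermInner_smul_left, hermInner_smul_right, div_mul_cancel₀ _ ha, hiso z hz,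
      hiso y hy]
    ring
  exact hC (eq_bot_iff.2 (hlcd ▸ le_inf le_rfl hself))

end HermInner

section HermOrthIn

variable {F : Type*} [Field F] {n : ℕ} {q : ℕ} {C : Submodule F (Fin n → F)} {x : Fin n → F}

def hermOrthIn (q : ℕ) (C : Submodule F (Fin n → F)) (x : Fin n → F) :
    Submodule F (Fin n → F) :=
  C ⊓ LinearMap.ker (hermInnerLinear q x)

lemma mem_hermOrthIn {y : Fin n → F} :
    y ∈ hermOrthIn q C x ↔ y ∈ C ∧ hermInner q y x = 0 :=
  Iff.rfl

lemma span_singleton_sup_hermOrthIn (hxC : x ∈ C) (hxx : hermInner q x x ≠ 0) :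
    Submodule.span F {x} ⊔ hermOrthIn q C x = C := by
  refine le_antisymm (sup_le ((Submodule.span_singleton_le_iff_mem x C).2 hxC) inf_le_left) ?_
  intro y hy
  set c := hermInner q y x / hermInner q x x
  have hres : y - c • x ∈ hermOrthIn q C x := by
    refine mem_hermOrthIn.2 ⟨C.sub_mem hy (C.smul_mem c hxC), ?_⟩
    rw [sub_eq_add_neg, ← neg_smul, hermInner_add_left, hermInner_smul_left,
      neg_mul, div_mul_cancel₀ _ hxx, add_neg_cancel]
  rw [← add_sub_cancel (c • x) y]
  exact Submodule.add_mem_sup (Submodule.smul_mem _ c (Submodule.mem_span_singleton_self x)) hres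

lemma span_singleton_inf_hermOrthIn (hxx : hermInner q x x ≠ 0) :
    Submodule.span F {x} ⊓ hermOrthIn q C x = ⊥ := by
  refine eq_bot_iff.2 fun z ⟨hz, hzD⟩ => ?_
  obtain ⟨c, rfl⟩ := Submodule.mem_span_singleton.1 hz
  have hc : c * hermInner q x x = 0 := by
    rw [← hermInner_smul_left]
    exact (mem_hermOrthIn.1 hzD).2
  simp [(mul_eq_zero.1 hc).resolve_right hxx]

lemma finrank_hermOrthIn_add_one (hxC : x ∈ C) (hxx : hermInner q x x ≠ 0) :
    Module.finrank F (hermOrthIn q C x) + 1 = Module.finrank F C := by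
  have hx : x ≠ 0 := by
    rintro rfl
    simp [hermInner] at hxx
  have h := Submodule.finrank_sup_add_finrank_inf_eq (Submodule.span F {x}) (hermOrthIn q C x)
  rw [span_singleton_sup_hermOrthIn hxC hxx, span_singleton_inf_hermOrthIn hxx,
    finrank_span_singleton hx, finrank_bot] at h
  omega

variable {p : ℕ} [ExpChar F p] {j : ℕ}

lemma hermInner_eq_zero_of_mem_hermOrthIn (hσ : ∀ z : F, (z ^ p ^ j) ^ p ^ j = z)
    {y : Fin n → F} (hy : y ∈ hermOrthIn (p ^ j) C x) : hermInner (p ^ j) x y = 0 := by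
  rw [← hσ (hermInner (p ^ j) x y), ← hermInner_swap hσ, (mem_hermOrthIn.1 hy).2,
    zero_pow (expChar_pow_pos F p j).ne']

lemma IsHermLCD.hermOrthIn (hlcd : IsHermLCD (p ^ j) C) (hxC : x ∈ C)
    (hxx : hermInner (p ^ j) x x ≠ 0) : IsHermLCD (p ^ j) (hermOrthIn (p ^ j) C x) := by
  refine eq_bot_iff.2 fun z ⟨hzD, hzdual⟩ => ?_
  have hzx := (mem_hermOrthIn.1 hzD).2
  have hzC : z ∈ hermDual (p ^ j) C := by
    intro y hy
    rw [← span_singleton_sup_hermOrthIn hxC hxx] at hy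
    obtain ⟨u, hu, v, hv, rfl⟩ := Submodule.mem_sup.1 hy
    obtain ⟨c, rfl⟩ := Submodule.mem_span_singleton.1 hu
    rw [hermInner_add_right, hermInner_smul_right, hzx, hzdual v hv, mul_zero, add_zero]
  exact hlcd ▸ (⟨(mem_hermOrthIn.1 hzD).1, hzC⟩ : z ∈ C ⊓ hermDual (p ^ j) C)

end HermOrthIn

/-- dimension `k ≥ 1` is written as `k + 1` -/
theorem stmt_2 {F : Type*} [Field F] [Fintype F] (q n k : ℕ) (hq : IsPrimePow q)
    (hcard : Fintype.card F = q ^ 2)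
    (C : Submodule F (Fin n → F)) (hdim : Module.finrank F C = k + 1)
    (hlcd : IsHermLCD q C) :
    ∃ G : Matrix (Fin (k + 1)) (Fin n) F,
      LinearIndependent F G ∧ Submodule.span F (Set.range G) = C ∧
      hermInner q (G 0) (G 0) ≠ 0 ∧
      (∀ i : Fin k, hermInner q (G 0) (G i.succ) = 0) ∧
      IsHermLCD q (Submodule.span F (Set.range fun i : Fin k => G i.succ)) ∧
      Module.finrank F (Submodule.span F (Set.range fun i : Fin k => G i.succ)) = k := by
  obtain ⟨j, rfl⟩ := hq.exists_eq_ringExpChar_pow (hcard ▸ dvd_pow_self q two_ne_zero)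
  have hσ := FiniteField.pow_pow_of_card_eq_sq hcard
  have htr := exists_add_pow_ne_zero (F := F) hq.one_lt
    (hcard ▸ lt_self_pow₀ hq.one_lt one_lt_two)
  have hC : C ≠ ⊥ := by
    rintro rfl
    simp at hdim
  obtain ⟨x, hxC, hxx⟩ := hlcd.exists_hermInner_self_ne_zero hσ htr hC
  have hD : Module.finrank F (hermOrthIn (ringExpChar F ^ j) C x) = k := by
    have := finrank_hermOrthIn_add_one hxC hxx
    omega
  obtain ⟨v, hv, hvD⟩ := Submodule.exists_linearIndependent_span_eq hD
  let G : Matrix (Fin (k + 1)) (Fin n) F := Fin.cons x v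
  have hG0 : G 0 = x := rfl
  have hGsucc : (fun i : Fin k => G i.succ) = v := rfl
  refine ⟨G, hv.finCons (hvD ▸ fun hx => hxx (mem_hermOrthIn.1 hx).2), ?_, hG0 ▸ hxx,
    fun i => hermInner_eq_zero_of_mem_hermOrthIn hσ (hvD.le (Submodule.subset_span ⟨i, rfl⟩)),
    ?_, ?_⟩
  · rw [Fin.range_cons, Submodule.span_insert, hvD, span_singleton_sup_hermOrthIn hxC hxx]
  · rw [hGsucc, hvD]
    exact hlcd.hermOrthIn hxC hxx
  · rwa [hGsucc, hvD]
end

section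
/- Let C be a Hermitian LCD [n,k,d] code over F_{q^2} with ℓ zero coordinates (ℓ < n). Then puncturing C on its zero coordinates yields a Hermitian LCD [n−ℓ, k, d] code whose Hermitian dual distance is at least 2. -/
open Finset Matrix

/-!
Every codeword vanishes off the range of `e`, so restriction along `e` preserves Hermitian inner
products with codewords and Hamming weights, and is injective on `C`; dimension, minimum weight and
the LCD property therefore pass to the punctured code. The punctured code has no zero coordinate,
and a weight-one vector `x` supported at `j` has `(x, c)_h = x j * (c j)^q`, which is nonzero for a
codeword with `c j ≠ 0`.
-/

open Function

lemma wt_le_one_iff {F : Type*} [Field F] {n : ℕ} {x : Fin n → F} :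
    wt x ≤ 1 ↔ ∀ i j, x i ≠ 0 → x j ≠ 0 → i = j := by
  classical
  rw [wt, Nat.card_eq_fintype_card, Fintype.card_le_one_iff]
  exact ⟨fun h i j hi hj => congrArg Subtype.val (h ⟨i, hi⟩ ⟨j, hj⟩),
    fun h a b => Subtype.ext (h a b a.2 b.2)⟩

lemma dualDistGeTwo_of_forall_exists_ne_zero {F : Type*} [Field F] (q : ℕ) {n : ℕ}
    {C : Submodule F (Fin n → F)} (hC : ∀ j, ∃ c ∈ C, c j ≠ 0) : dualDistGeTwo q C := by
  intro x hx hx0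
  by_contra! hlt
  obtain ⟨j, hxj⟩ := Function.ne_iff.mp hx0
  have hsupp : ∀ i, i ≠ j → x i = 0 := fun i hij =>
    by_contra fun hxi => hij (wt_le_one_iff.mp (Nat.lt_succ_iff.mp hlt) i j hxi hxj)
  obtain ⟨c, hc, hcj⟩ := hC j
  have hinner : hermInner q x c = x j * c j ^ q :=
    Finset.sum_eq_single j (fun i _ hij => by rw [hsupp i hij, zero_mul]) (by simp)
  exact mul_ne_zero hxj (pow_ne_zero q hcj) (hinner ▸ hx c hc)

section Restriction

variable {F : Type*} [Field F] {m n : ℕ} {e : Fin m → Fin n} {c : Fin n → F}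

lemma hermInner_comp_of_eq_zero_off_range (he : Injective e) (q : ℕ)
    (hc : ∀ i ∉ Set.range e, c i = 0) (y : Fin n → F) :
    hermInner q (c ∘ e) (y ∘ e) = hermInner q c y :=
  Fintype.sum_of_injective e he _ _ (fun i hi => by rw [hc i hi, zero_mul]) fun _ => rfl

lemma wt_comp_of_eq_zero_off_range (he : Injective e) (hc : ∀ i ∉ Set.range e, c i = 0) :
    wt (c ∘ e) = wt c := by
  refine Nat.card_eq_of_bijective (fun j => ⟨e j.1, j.2⟩)
    ⟨fun a b h => Subtype.ext (he (congrArg Subtype.val h)), fun ⟨i, hi⟩ => ?_⟩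
  obtain ⟨j, rfl⟩ : i ∈ Set.range e := by_contra fun h => hi (hc i h)
  exact ⟨⟨j, hi⟩, rfl⟩

lemma eq_zero_of_comp_eq_zero_of_eq_zero_off_range (hc : ∀ i ∉ Set.range e, c i = 0)
    (h : c ∘ e = 0) : c = 0 := by
  funext i
  by_cases hi : i ∈ Set.range e
  · obtain ⟨j, rfl⟩ := hi
    exact congrFun h j
  · exact hc i hi

variable {C : Submodule F (Fin n → F)} (hC : ∀ c ∈ C, ∀ i ∉ Set.range e, c i = 0)
include hC

lemma injective_funLeft_comp_subtype_of_eq_zero_off_range :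
    Injective (LinearMap.funLeft F F e ∘ₗ C.subtype) :=
  (injective_iff_map_eq_zero _).mpr fun c h =>
    Subtype.ext (eq_zero_of_comp_eq_zero_of_eq_zero_off_range (hC c c.2) h)

lemma finrank_map_funLeft_of_eq_zero_off_range :
    Module.finrank F (C.map (LinearMap.funLeft F F e)) = Module.finrank F C := by
  rw [← LinearMap.finrank_range_of_inj (injective_funLeft_comp_subtype_of_eq_zero_off_range hC),
    LinearMap.range_comp, Submodule.range_subtype]

lemma IsHermLCD.map_funLeft_of_eq_zero_off_range (he : Injective e) {q : ℕ}
    (hlcd : IsHermLCD q C) : IsHermLCD q (C.map (LinearMap.funLeft F F e)) := by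
  rw [IsHermLCD, eq_bot_iff]
  rintro _ ⟨⟨c, hc, rfl⟩, hdual⟩
  have hc_dual : c ∈ hermDual q C := fun y hy => by
    rw [← hermInner_comp_of_eq_zero_off_range he q (hC c hc) y]
    exact hdual _ (Submodule.mem_map_of_mem hy)
  have hc0 : c ∈ C ⊓ hermDual q C := ⟨hc, hc_dual⟩
  rw [hlcd, Submodule.mem_bot] at hc0
  simp [hc0]

lemma minWt.map_funLeft_of_eq_zero_off_range (he : Injective e) {d : ℕ} (hd : minWt C d) :
    minWt (C.map (LinearMap.funLeft F F e)) d := by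
  obtain ⟨⟨c, hc, hc0, hcd⟩, hmin⟩ := hd
  refine ⟨⟨c ∘ e, Submodule.mem_map_of_mem hc,
    fun h => hc0 (eq_zero_of_comp_eq_zero_of_eq_zero_off_range (hC c hc) h), ?_⟩, ?_⟩
  · rw [wt_comp_of_eq_zero_off_range he (hC c hc), hcd]
  · rintro _ ⟨c', hc', rfl⟩ hc'0
    show d ≤ wt (c' ∘ e)
    rw [wt_comp_of_eq_zero_off_range he (hC c' hc')]
    exact hmin c' hc' (by rintro rfl; exact hc'0 (map_zero _))

end Restriction

theorem stmt_5_general {F : Type*} [Field F] (q n k d ℓ : ℕ)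
    (C : Submodule F (Fin n → F)) (hdim : Module.finrank F C = k)
    (hlcd : IsHermLCD q C) (hd : minWt C d)
    (e : Fin (n - ℓ) → Fin n) (he : Function.Injective e)
    (hrange : ∀ i : Fin n, (i ∈ Set.range e ↔ ∃ c ∈ C, c i ≠ 0)) :
    Module.finrank F (C.map (LinearMap.funLeft F F e)) = k ∧
    IsHermLCD q (C.map (LinearMap.funLeft F F e)) ∧
    minWt (C.map (LinearMap.funLeft F F e)) d ∧
    dualDistGeTwo q (C.map (LinearMap.funLeft F F e)) := by
  have hC : ∀ c ∈ C, ∀ i ∉ Set.range e, c i = 0 := fun c hc i hi =>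
    by_contra fun hci => hi ((hrange i).mpr ⟨c, hc, hci⟩)
  refine ⟨hdim ▸ finrank_map_funLeft_of_eq_zero_off_range hC,
    hlcd.map_funLeft_of_eq_zero_off_range hC he, hd.map_funLeft_of_eq_zero_off_range hC he,
    dualDistGeTwo_of_forall_exists_ne_zero q fun j => ?_⟩
  obtain ⟨c, hc, hcj⟩ := (hrange (e j)).mp ⟨j, rfl⟩
  exact ⟨c ∘ e, Submodule.mem_map_of_mem hc, hcj⟩

/-- puncturing a Hermitian LCD `[n,k,d]` code on its `ℓ` zero coordinates
(`ℓ < n`) gives a Hermitian LCD `[n-ℓ,k,d]` code with Hermitian dual distance `≥ 2`.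
The punctured code is the image of `C` under restriction along an embedding
`e : Fin (n - ℓ) ↪ Fin n` enumerating the nonzero coordinates. -/
theorem stmt_5 {F : Type*} [Field F] [Fintype F] (q n k d ℓ : ℕ) (hq : IsPrimePow q)
    (hcard : Fintype.card F = q ^ 2)
    (C : Submodule F (Fin n → F)) (hdim : Module.finrank F C = k)
    (hlcd : IsHermLCD q C) (hd : minWt C d)
    (hl : Nat.card {i : Fin n // ∀ c ∈ C, c i = 0} = ℓ) (hln : ℓ < n)
    (e : Fin (n - ℓ) → Fin n) (he : Function.Injective e)
    (hrange : ∀ i : Fin n, (i ∈ Set.range e ↔ ∃ c ∈ C, c i ≠ 0)) :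
    Module.finrank F (C.map (LinearMap.funLeft F F e)) = k ∧
    IsHermLCD q (C.map (LinearMap.funLeft F F e)) ∧
    minWt (C.map (LinearMap.funLeft F F e)) d ∧
    dualDistGeTwo q (C.map (LinearMap.funLeft F F e)) :=
  stmt_5_general q n k d ℓ C hdim hlcd hd e he hrange
end

section
/- Let k ≥ 2 and d₀ a positive integer. If there exists no quaternary Hermitian LCD [n,k,d] code with d ≥ d₀ and Hermitian dual distance at least 2, then there exists no quaternary Hermitian LCD [n,k,d] code with d ≥ d₀ and Hermitian dual distance equal to 1. -/
open Finset Matrix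

/-!
Every Hermitian LCD code over `𝔽₄` of dimension `k ≥ 2` can be changed into one with the same
length, dimension and LCD property, weights at least as large, and no coordinate vanishing on
the whole code, i.e. with Hermitian dual distance at least `2`.

Let `S` be the set of coordinates vanishing on `C`. If `#S` is even, copy a nonzero coordinate
`j` into every position of `S`; the Hermitian form changes by `#S • c_j c'_j² = 0`. If `#S` is
odd, pick coordinates `j₁, j₂` such that `c_{j₂}` and every `c_{j₁} + t c_{j₂}` are nonzero
functionals on `C` (possible since `k ≥ 2`), and replace `(a, b) = (c_{j₁}, c_{j₂})` by
`a + ω b`, `a + ω² b` at `j₁, j₂` and by `a + b` on `S`. In characteristic `2`,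
`∑_{t³ = 1} (a + t b)(a' + t b')² = a a'² + b b'²`, so the form is preserved, and at most one
of the three values `a + t b` vanishes, so weights do not drop. A form-preserving map is
injective on an LCD code, so the image is again LCD of the same dimension.
-/

open Module

section Support

variable {F : Type*} [Field F] {n : ℕ}

def HasFullSupport (C : Submodule F (Fin n → F)) : Prop :=
  ∀ m, ∃ c ∈ C, c m ≠ 0

lemma wt_eq_card [DecidableEq F] (x : Fin n → F) : wt x = #{i | x i ≠ 0} := by
  rw [wt, Nat.card_eq_fintype_card, Fintype.card_subtype]

lemma wt_eq_zero_iff {x : Fin n → F} : wt x = 0 ↔ x = 0 := by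
  classical
  rw [wt_eq_card, Finset.card_eq_zero, Finset.filter_eq_empty_iff, funext_iff]
  simp

lemma exists_forall_apply_eq_zero_of_wt_eq_one {q : ℕ} {C : Submodule F (Fin n → F)}
    {x : Fin n → F} (hx : x ∈ hermDual q C) (hwt : wt x = 1) : ∃ i, ∀ c ∈ C, c i = 0 := by
  classical
  rw [wt_eq_card, Finset.card_eq_one] at hwt
  obtain ⟨i, hi⟩ := hwt
  obtain ⟨hxi, hsupp⟩ := Finset.eq_singleton_iff_unique_mem.1 hi
  refine ⟨i, fun c hc => ?_⟩
  have h0 : hermInner q x c = x i * c i ^ q := by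
    refine Finset.sum_eq_single i (fun j _ hj => ?_) (by simp)
    have hxj : x j = 0 := by_contra fun h => hj (hsupp j (by simpa using h))
    rw [hxj, zero_mul]
  rw [hx c hc, eq_comm, mul_eq_zero] at h0
  exact h0.resolve_left (by simpa using hxi) |> eq_zero_of_pow_eq_zero

lemma HasFullSupport.dualDistGeTwo {C : Submodule F (Fin n → F)} (hC : HasFullSupport C)
    (q : ℕ) : dualDistGeTwo q C := by
  intro x hx hx0
  by_contra! hlt
  have hwt : wt x = 1 := by
    have := wt_eq_zero_iff.not.2 hx0
    omega
  obtain ⟨i, hi⟩ := exists_forall_apply_eq_zero_of_wt_eq_one hx hwt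
  obtain ⟨c, hc, hci⟩ := hC i
  exact hci (hi c hc)

lemma hermInner_eq_of_eqOn_compl {q : ℕ} (T : Finset (Fin n)) {x y x' y' : Fin n → F}
    (hx : ∀ m ∉ T, x m = x' m) (hy : ∀ m ∉ T, y m = y' m)
    (hT : ∑ m ∈ T, x m * y m ^ q = ∑ m ∈ T, x' m * y' m ^ q) :
    hermInner q x y = hermInner q x' y' := by
  unfold hermInner
  rw [← Finset.sum_add_sum_compl T, ← Finset.sum_add_sum_compl T, hT]
  congr 1
  exact Finset.sum_congr rfl fun m hm => by
    rw [hx m (Finset.mem_compl.1 hm), hy m (Finset.mem_compl.1 hm)]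

lemma wt_le_wt_of_eqOn_compl [DecidableEq F] (T : Finset (Fin n)) {x x' : Fin n → F}
    (hx : ∀ m ∉ T, x m = x' m) (hT : #{m ∈ T | x m ≠ 0} ≤ #{m ∈ T | x' m ≠ 0}) :
    wt x ≤ wt x' := by
  rw [Finset.card_filter, Finset.card_filter] at hT
  rw [wt_eq_card, wt_eq_card, Finset.card_filter, Finset.card_filter,
    ← Finset.sum_add_sum_compl T, ← Finset.sum_add_sum_compl T]
  refine add_le_add hT (Finset.sum_le_sum fun m hm => ?_)
  rw [hx m (Finset.mem_compl.1 hm)]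

lemma exists_coord_pair_of_two_le_finrank {C : Submodule F (Fin n → F)} (hC : 2 ≤ finrank F C) :
    ∃ j₁ j₂ : Fin n, (∃ c ∈ C, c j₂ ≠ 0) ∧ ∀ t : F, ∃ c ∈ C, c j₁ + t * c j₂ ≠ 0 := by
  have hne : C ≠ ⊥ := Submodule.one_le_finrank_iff.1 (by omega)
  obtain ⟨c, hc, hc0⟩ := Submodule.exists_mem_ne_zero_of_ne_bot hne
  obtain ⟨j₂, hj₂⟩ := Function.ne_iff.1 hc0
  by_contra! h
  choose t ht using fun j => h j j₂ ⟨c, hc, hj₂⟩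
  have hinj : Function.Injective ((LinearMap.proj j₂).comp C.subtype) := by
    rw [← LinearMap.ker_eq_bot, Submodule.eq_bot_iff]
    rintro ⟨v, hv⟩ hv0
    ext m
    simpa [show v j₂ = 0 from hv0] using ht m v hv
  have := LinearMap.finrank_le_finrank_of_injective hinj
  rw [finrank_self] at this
  omega

end Support

section HermIsometry

variable {F : Type*} [Field F] {n q : ℕ} {C : Submodule F (Fin n → F)}
  {ψ : (Fin n → F) →ₗ[F] (Fin n → F)}

lemma IsHermLCD.eq_zero (hC : IsHermLCD q C) {c : Fin n → F} (hc : c ∈ C)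
    (hc_dual : c ∈ hermDual q C) : c = 0 := by
  have : c ∈ C ⊓ hermDual q C := ⟨hc, hc_dual⟩
  rwa [hC, Submodule.mem_bot] at this

lemma IsHermLCD.map (hC : IsHermLCD q C)
    (hψ : ∀ c ∈ C, ∀ c' ∈ C, hermInner q (ψ c) (ψ c') = hermInner q c c') :
    IsHermLCD q (C.map ψ) := by
  rw [IsHermLCD, Submodule.eq_bot_iff]
  rintro _ ⟨⟨c, hc, rfl⟩, hdual⟩
  refine (hC.eq_zero hc fun c' hc' => ?_) ▸ map_zero ψ
  rw [← hψ c hc c' hc']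
  exact hdual _ (Submodule.mem_map_of_mem hc')

lemma IsHermLCD.disjoint_ker (hC : IsHermLCD q C)
    (hψ : ∀ c ∈ C, ∀ c' ∈ C, hermInner q (ψ c) (ψ c') = hermInner q c c') :
    Disjoint C (LinearMap.ker ψ) := by
  refine Submodule.disjoint_def.2 fun c hc hker => hC.eq_zero hc fun c' hc' => ?_
  rw [← hψ c hc c' hc', LinearMap.mem_ker.1 hker]
  simp [hermInner]

lemma finrank_map_of_disjoint_ker (h : Disjoint C (LinearMap.ker ψ)) :
    finrank F (C.map ψ) = finrank F C := by
  rw [← LinearMap.range_domRestrict]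
  exact LinearMap.finrank_range_of_inj (LinearMap.injective_domRestrict_iff.2 h)

lemma exists_le_minWt_map {d : ℕ} (hmin : minWt C d) (h : Disjoint C (LinearMap.ker ψ))
    (hwt : ∀ c ∈ C, wt c ≤ wt (ψ c)) : ∃ d', d ≤ d' ∧ minWt (C.map ψ) d' := by
  classical
  have hψ0 : ∀ c ∈ C, c ≠ 0 → ψ c ≠ 0 := fun c hc hc0 hψc =>
    hc0 (Submodule.disjoint_def.1 h c hc hψc)
  obtain ⟨c₀, hc₀, hc₀0, -⟩ := hmin.1
  have hP : ∃ w, ∃ v ∈ C.map ψ, v ≠ 0 ∧ wt v = w :=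
    ⟨_, ψ c₀, Submodule.mem_map_of_mem hc₀, hψ0 c₀ hc₀ hc₀0, rfl⟩
  obtain ⟨v, hv, hv0, hvw⟩ := Nat.find_spec hP
  refine ⟨Nat.find hP, ?_, ⟨v, hv, hv0, hvw⟩,
    fun v hv hv0 => Nat.find_min' hP ⟨v, hv, hv0, rfl⟩⟩
  obtain ⟨c, hc, rfl⟩ := hv
  rw [← hvw]
  exact (hmin.2 c hc fun h0 => hv0 (by rw [h0, map_zero])).trans (hwt c hc)

end HermIsometry

section CopyCoord

variable {F : Type*} [Field F] {n : ℕ}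

def copyCoord (S : Finset (Fin n)) (j : Fin n) : (Fin n → F) →ₗ[F] (Fin n → F) :=
  LinearMap.pi fun m => if m ∈ S then LinearMap.proj j else LinearMap.proj m

lemma copyCoord_apply (S : Finset (Fin n)) (j : Fin n) (v : Fin n → F) (m : Fin n) :
    copyCoord S j v m = if m ∈ S then v j else v m := by
  unfold copyCoord
  split_ifs <;> simp [*]

variable {C : Submodule F (Fin n → F)} {S : Finset (Fin n)}

lemma hermInner_copyCoord {q : ℕ} (hS : ∀ m ∈ S, ∀ c ∈ C, c m = 0) (hS0 : (#S : F) = 0)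
    (j : Fin n) {c c' : Fin n → F} (hc : c ∈ C) :
    hermInner q (copyCoord S j c) (copyCoord S j c') = hermInner q c c' := by
  refine hermInner_eq_of_eqOn_compl S (fun m hm => by rw [copyCoord_apply, if_neg hm])
    (fun m hm => by rw [copyCoord_apply, if_neg hm]) ?_
  have hcopy :
      ∑ m ∈ S, copyCoord S j c m * copyCoord S j c' m ^ q = #S * (c j * c' j ^ q) := by
    rw [← nsmul_eq_mul, ← Finset.sum_const]
    exact Finset.sum_congr rfl fun m hm => by simp only [copyCoord_apply, if_pos hm]
  rw [hcopy, hS0, zero_mul, Finset.sum_eq_zero fun m hm => by rw [hS m hm c hc, zero_mul]]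

lemma wt_le_wt_copyCoord (hS : ∀ m ∈ S, ∀ c ∈ C, c m = 0) (j : Fin n) {c : Fin n → F}
    (hc : c ∈ C) : wt c ≤ wt (copyCoord S j c) := by
  classical
  refine wt_le_wt_of_eqOn_compl S (fun m hm => by rw [copyCoord_apply, if_neg hm]) ?_
  rw [Finset.filter_false_of_mem fun m hm => not_not.2 (hS m hm c hc)]
  exact Nat.zero_le _

lemma hasFullSupport_map_copyCoord (hSc : ∀ m ∉ S, ∃ c ∈ C, c m ≠ 0) {j : Fin n}
    (hj : ∃ c ∈ C, c j ≠ 0) : HasFullSupport (C.map (copyCoord S j)) := by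
  intro m
  by_cases hm : m ∈ S
  · obtain ⟨c, hc, hcj⟩ := hj
    exact ⟨_, Submodule.mem_map_of_mem hc, by rwa [copyCoord_apply, if_pos hm]⟩
  · obtain ⟨c, hc, hcm⟩ := hSc m hm
    exact ⟨_, Submodule.mem_map_of_mem hc, by rwa [copyCoord_apply, if_neg hm]⟩

end CopyCoord

section SpreadPair

variable {F : Type*} [Field F] {n : ℕ}

lemma sum_mul_sq_cubeRoots [CharP F 2] {ω : F} (hω : ω ^ 2 + ω + 1 = 0) (a b a' b' : F) :
    (a + b) * (a' + b') ^ 2 + (a + ω * b) * (a' + ω * b') ^ 2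
      + (a + ω ^ 2 * b) * (a' + ω ^ 2 * b') ^ 2 = a * a' ^ 2 + b * b' ^ 2 := by
  linear_combination (a * a' ^ 2 + ω ^ 3 * b * b' ^ 2) * CharTwo.two_eq_zero (R := F) +
    (2 * a * a' * b' + (ω ^ 2 - ω + 1) * a * b' ^ 2 + a' ^ 2 * b
      + 2 * (ω ^ 2 - ω + 1) * a' * b * b' + ω ^ 3 * (ω - 1) * b * b' ^ 2) * hω

lemma eq_zero_of_add_mul_eq_zero_of_add_mul_eq_zero {s t a b : F} (hst : s ≠ t)
    (hs : a + s * b = 0) (ht : a + t * b = 0) : a = 0 ∧ b = 0 := by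
  have hb : b = 0 := by
    have : (s - t) * b = 0 := by linear_combination hs - ht
    exact (mul_eq_zero.1 this).resolve_left (sub_ne_zero.2 hst)
  exact ⟨by simpa [hb] using hs, hb⟩

lemma cubeRoots_ne [CharP F 2] {ω : F} (hω : ω ^ 2 + ω + 1 = 0) :
    1 ≠ ω ∧ ω ≠ ω ^ 2 ∧ 1 ≠ ω ^ 2 := by
  have h2 : (2 : F) = 0 := CharTwo.two_eq_zero
  refine ⟨fun h => one_ne_zero (α := F) ?_, fun h => one_ne_zero (α := F) ?_,
    fun h => one_ne_zero (α := F) ?_⟩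
  · subst h
    linear_combination hω - h2
  · linear_combination hω + h - ω * h2
  · linear_combination ω * hω + (ω + 1) * h - ω * h2

def spreadPair (S : Finset (Fin n)) (j₁ j₂ : Fin n) (ω : F) :
    (Fin n → F) →ₗ[F] (Fin n → F) :=
  let π : Fin n → (Fin n → F) →ₗ[F] F := LinearMap.proj
  LinearMap.pi fun m =>
    if m = j₁ then π j₁ + ω • π j₂
    else if m = j₂ then π j₁ + ω ^ 2 • π j₂
    else if m ∈ S then π j₁ + π j₂
    else π m

lemma spreadPair_apply (S : Finset (Fin n)) (j₁ j₂ : Fin n) (ω : F) (v : Fin n → F)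
    (m : Fin n) :
    spreadPair S j₁ j₂ ω v m =
      if m = j₁ then v j₁ + ω * v j₂
      else if m = j₂ then v j₁ + ω ^ 2 * v j₂
      else if m ∈ S then v j₁ + v j₂
      else v m := by
  simp only [spreadPair, LinearMap.pi_apply]
  split_ifs <;> simp

variable {C : Submodule F (Fin n → F)} {S : Finset (Fin n)} {j₁ j₂ : Fin n}

lemma spreadPair_apply_of_notMem {ω : F} {v : Fin n → F} {m : Fin n}
    (hm : m ∉ insert j₁ (insert j₂ S)) : spreadPair S j₁ j₂ ω v m = v m := by
  simp only [Finset.mem_insert, not_or] at hm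
  simp [spreadPair_apply, hm]

lemma sum_insert_insert {M : Type*} [AddCommMonoid M] (hj₁ : j₁ ∉ S) (hj₂ : j₂ ∉ S)
    (hj : j₁ ≠ j₂) (f : Fin n → M) :
    ∑ m ∈ insert j₁ (insert j₂ S), f m = f j₁ + (f j₂ + ∑ m ∈ S, f m) := by
  rw [Finset.sum_insert (by simp [hj, hj₁]), Finset.sum_insert hj₂]

lemma hermInner_spreadPair [CharP F 2] {ω : F} (hω : ω ^ 2 + ω + 1 = 0)
    (hS : ∀ m ∈ S, ∀ c ∈ C, c m = 0) (hS1 : (#S : F) = 1)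
    (hj₁ : j₁ ∉ S) (hj₂ : j₂ ∉ S) (hj : j₁ ≠ j₂) {c c' : Fin n → F} (hc : c ∈ C) :
    hermInner 2 (spreadPair S j₁ j₂ ω c) (spreadPair S j₁ j₂ ω c') = hermInner 2 c c' := by
  refine hermInner_eq_of_eqOn_compl _ (fun m hm => spreadPair_apply_of_notMem hm)
    (fun m hm => spreadPair_apply_of_notMem hm) ?_
  have hspread : ∑ m ∈ S, spreadPair S j₁ j₂ ω c m * spreadPair S j₁ j₂ ω c' m ^ 2
      = #S * ((c j₁ + c j₂) * (c' j₁ + c' j₂) ^ 2) := by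
    rw [← nsmul_eq_mul, ← Finset.sum_const]
    refine Finset.sum_congr rfl fun m hm => ?_
    have : m ≠ j₁ ∧ m ≠ j₂ := ⟨ne_of_mem_of_not_mem hm hj₁, ne_of_mem_of_not_mem hm hj₂⟩
    simp [spreadPair_apply, this, hm]
  rw [sum_insert_insert hj₁ hj₂ hj, sum_insert_insert hj₁ hj₂ hj, hspread, hS1,
    Finset.sum_eq_zero fun m hm => by rw [hS m hm c hc, zero_mul]]
  simp only [spreadPair_apply, if_true, if_neg hj.symm]
  linear_combination sum_mul_sq_cubeRoots hω (c j₁) (c j₂) (c' j₁) (c' j₂)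

lemma wt_le_wt_spreadPair [CharP F 2] {ω : F} (hω : ω ^ 2 + ω + 1 = 0)
    (hS : ∀ m ∈ S, ∀ c ∈ C, c m = 0) (hSne : S.Nonempty)
    (hj₁ : j₁ ∉ S) (hj₂ : j₂ ∉ S) (hj : j₁ ≠ j₂) {c : Fin n → F} (hc : c ∈ C) :
    wt c ≤ wt (spreadPair S j₁ j₂ ω c) := by
  classical
  refine wt_le_wt_of_eqOn_compl _ (fun m hm => (spreadPair_apply_of_notMem hm).symm) ?_
  have hspread : ∑ m ∈ S, (if spreadPair S j₁ j₂ ω c m ≠ 0 then 1 else 0)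
      = #S * if c j₁ + c j₂ ≠ 0 then 1 else 0 := by
    rw [← smul_eq_mul, ← Finset.sum_const]
    refine Finset.sum_congr rfl fun m hm => ?_
    have : m ≠ j₁ ∧ m ≠ j₂ := ⟨ne_of_mem_of_not_mem hm hj₁, ne_of_mem_of_not_mem hm hj₂⟩
    simp [spreadPair_apply, this, hm]
  rw [Finset.card_filter, Finset.card_filter, sum_insert_insert hj₁ hj₂ hj,
    sum_insert_insert hj₁ hj₂ hj, hspread,
    Finset.sum_eq_zero fun m hm => by simp [hS m hm c hc]]
  simp only [spreadPair_apply, if_true, if_neg hj.symm]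
  have hS1 : 1 ≤ #S := hSne.card_pos
  by_cases h0 : c j₁ = 0 ∧ c j₂ = 0
  · simp [h0]
  have key : ∀ s t : F, s ≠ t → c j₁ + s * c j₂ = 0 → c j₁ + t * c j₂ = 0 → False :=
    fun s t hst hs ht => h0 (eq_zero_of_add_mul_eq_zero_of_add_mul_eq_zero hst hs ht)
  obtain ⟨h1ω, hωω2, h1ω2⟩ := cubeRoots_ne hω
  have k1 := key 1 ω h1ω
  have k2 := key ω (ω ^ 2) hωω2
  have k3 := key 1 (ω ^ 2) h1ω2
  rw [one_mul] at k1 k3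
  split_ifs <;> first | omega | tauto

lemma hasFullSupport_map_spreadPair {ω : F} (hSc : ∀ m ∉ S, ∃ c ∈ C, c m ≠ 0)
    (hpair : ∀ t : F, ∃ c ∈ C, c j₁ + t * c j₂ ≠ 0) :
    HasFullSupport (C.map (spreadPair S j₁ j₂ ω)) := by
  intro m
  suffices ∃ c ∈ C, spreadPair S j₁ j₂ ω c m ≠ 0 by
    obtain ⟨c, hc, hcm⟩ := this
    exact ⟨_, Submodule.mem_map_of_mem hc, hcm⟩
  simp only [spreadPair_apply]
  split_ifs with h₁ h₂ hm
  · exact hpair ω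
  · exact hpair (ω ^ 2)
  · simpa using hpair 1
  · exact hSc m hm

end SpreadPair

theorem exists_hermIsometry_hasFullSupport {F : Type*} [Field F] [CharP F 2] {n : ℕ} {ω : F}
    (hω : ω ^ 2 + ω + 1 = 0) {C : Submodule F (Fin n → F)} (hC : 2 ≤ finrank F C) :
    ∃ ψ : (Fin n → F) →ₗ[F] (Fin n → F),
      (∀ c ∈ C, ∀ c' ∈ C, hermInner 2 (ψ c) (ψ c') = hermInner 2 c c') ∧
      (∀ c ∈ C, wt c ≤ wt (ψ c)) ∧ HasFullSupport (C.map ψ) := by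
  classical
  obtain ⟨j₁, j₂, hj₂, hpair⟩ := exists_coord_pair_of_two_le_finrank hC
  set S : Finset (Fin n) := {m | ∀ c ∈ C, c m = 0}
  have hS : ∀ m ∈ S, ∀ c ∈ C, c m = 0 := fun m hm => (Finset.mem_filter.1 hm).2
  have hSc : ∀ m ∉ S, ∃ c ∈ C, c m ≠ 0 := fun m hm => by
    simpa [S] using hm
  rcases Nat.even_or_odd #S with heven | hodd
  · have hS0 : (#S : F) = 0 :=
      natCast_eq_zero_of_even_of_two_eq_zero heven CharTwo.two_eq_zero
    exact ⟨copyCoord S j₂, fun c hc c' _ => hermInner_copyCoord hS hS0 j₂ hc,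
      fun c hc => wt_le_wt_copyCoord hS j₂ hc, hasFullSupport_map_copyCoord hSc hj₂⟩
  have hS1 : (#S : F) = 1 := natCast_eq_one_of_odd_of_two_eq_zero hodd CharTwo.two_eq_zero
  have hj₁S : j₁ ∉ S := fun h => by
    obtain ⟨c, hc, hc0⟩ := hpair 0
    exact hc0 (by simp [hS j₁ h c hc])
  have hj₂S : j₂ ∉ S := fun h => by
    obtain ⟨c, hc, hc0⟩ := hj₂
    exact hc0 (hS j₂ h c hc)
  have hj : j₁ ≠ j₂ := by
    rintro rfl
    obtain ⟨c, hc, hc0⟩ := hpair 1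
    exact hc0 (by rw [one_mul]; exact CharTwo.add_self_eq_zero _)
  have hSne : S.Nonempty := Finset.card_pos.1 hodd.pos
  exact ⟨spreadPair S j₁ j₂ ω,
    fun c hc c' _ => hermInner_spreadPair hω hS hS1 hj₁S hj₂S hj hc,
    fun c hc => wt_le_wt_spreadPair hω hS hSne hj₁S hj₂S hj hc,
    hasFullSupport_map_spreadPair hSc hpair⟩

lemma GaloisField.exists_sq_add_self_add_one_eq_zero :
    ∃ ω : GaloisField 2 2, ω ^ 2 + ω + 1 = 0 := by
  classical
  let _ : Fintype (GaloisField 2 2) := Fintype.ofFinite _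
  have hcard : Fintype.card (GaloisField 2 2) = 4 := by
    rw [← Nat.card_eq_fintype_card, GaloisField.card 2 2 two_ne_zero]
    norm_num
  have hlt : #({0, 1} : Finset (GaloisField 2 2)) < #(Finset.univ : Finset (GaloisField 2 2)) := by
    rw [Finset.card_univ, hcard]
    exact Finset.card_le_two.trans_lt (by norm_num)
  obtain ⟨ω, -, hω⟩ := Finset.exists_mem_notMem_of_card_lt_card hlt
  simp only [Finset.mem_insert, Finset.mem_singleton, not_or] at hω
  have h3 : ω ^ 3 = 1 := by simpa [hcard] using FiniteField.pow_card_sub_one_eq_one ω hω.1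
  have : (ω - 1) * (ω ^ 2 + ω + 1) = 0 := by linear_combination h3
  exact ⟨ω, (mul_eq_zero.1 this).resolve_left (sub_ne_zero.2 hω.2)⟩

theorem stmt_6_general (n k d₀ : ℕ) (hk : 2 ≤ k)
    (h : ¬ ∃ d : ℕ, d₀ ≤ d ∧
      ∃ C : Submodule (GaloisField 2 2) (Fin n → GaloisField 2 2),
        Module.finrank (GaloisField 2 2) C = k ∧ IsHermLCD 2 C ∧ minWt C d ∧
        dualDistGeTwo 2 C) :
    ¬ ∃ d : ℕ, d₀ ≤ d ∧
      ∃ C : Submodule (GaloisField 2 2) (Fin n → GaloisField 2 2),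
        Module.finrank (GaloisField 2 2) C = k ∧ IsHermLCD 2 C ∧ minWt C d ∧
        dualDistOne 2 C := by
  rintro ⟨d, hd, C, hrank, hlcd, hmin, -⟩
  obtain ⟨ω, hω⟩ := GaloisField.exists_sq_add_self_add_one_eq_zero
  obtain ⟨ψ, hψ, hwt, hfull⟩ := exists_hermIsometry_hasFullSupport hω (hrank ▸ hk)
  have hker := hlcd.disjoint_ker hψ
  obtain ⟨d', hdd', hmin'⟩ := exists_le_minWt_map hmin hker hwt
  exact h ⟨d', hd.trans hdd', C.map ψ, (finrank_map_of_disjoint_ker hker).trans hrank,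
    hlcd.map hψ, hmin', hfull.dualDistGeTwo 2⟩

theorem stmt_6 (n k d₀ : ℕ) (hk : 2 ≤ k) (hd₀ : 1 ≤ d₀)
    (h : ¬ ∃ d : ℕ, d₀ ≤ d ∧
      ∃ C : Submodule (GaloisField 2 2) (Fin n → GaloisField 2 2),
        Module.finrank (GaloisField 2 2) C = k ∧ IsHermLCD 2 C ∧ minWt C d ∧
        dualDistGeTwo 2 C) :
    ¬ ∃ d : ℕ, d₀ ≤ d ∧
      ∃ C : Submodule (GaloisField 2 2) (Fin n → GaloisField 2 2),
        Module.finrank (GaloisField 2 2) C = k ∧ IsHermLCD 2 C ∧ minWt C d ∧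
        dualDistOne 2 C :=
  stmt_6_general n k d₀ hk h
end

section
/- Let k ≥ 3, and suppose a quaternary code C has a generator matrix with rows x, x', g₃, ..., g_k over F_4 such that (x,x)_h ≠ 0, (x',x')_h ≠ 0, (x,x')_h = 0, x and x' are Hermitian-orthogonal to all of g₃,...,g_k, and the code C₂ generated by g₃,...,g_k is Hermitian LCD of dimension k−2. Let G be the matrix obtained by appending the column (1,1,0,...,0)^T. Then det(G·conj(G)^T) = det(G₂·conj(G₂)^T) ≠ 0, where G₂ is the matrix with rows g₃,...,g_k; hence the code generated by G is Hermitian LCD of length n+1. -/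
open Finset Matrix

/-!
Order the rows as `(x, 1), (x', 1) | (g₃, 0), …, (g_k, 0)`. As each `gᵢ` is orthogonal to `x`
and `x'` and the new coordinate vanishes on the `gᵢ`-rows, the Hermitian Gram matrix
`G · conj(G)ᵀ` is block upper triangular. Over `F₄` the norm `(x, x)_h` is fixed by Frobenius,
so it lies in `F₂` and equals `1`; the upper block is then `[[0, 1], [1, 0]]`, of determinant
`-1 = 1`. The lower block is the Gram matrix of `G₂`, which is nonsingular because a kernel
vector `c` would give a codeword `c G₂` of the LCD code `C₂` orthogonal to `C₂`; conversely a
nonsingular Gram matrix makes the code generated by `G` Hermitian LCD.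
-/

variable {F : Type*} [Field F]

def hermGram (q : ℕ) {ι : Type*} {n : ℕ} (A : Matrix ι (Fin n) F) : Matrix ι ι F :=
  A * (A.map (· ^ q))ᵀ

section Gram

variable {ι κ : Type*} {n : ℕ} (q : ℕ)

lemma hermGram_apply (A : Matrix ι (Fin n) F) (i j : ι) :
    hermGram q A i j = hermInner q (A i) (A j) := by
  simp [hermGram, mul_apply, hermInner]

lemma hermGram_submatrix (A : Matrix κ (Fin n) F) (e : ι → κ) :
    hermGram q (A.submatrix e id) = (hermGram q A).submatrix e e :=
  rfl

lemma hermInner_lastCases (x y : Fin n → F) (a b : F) :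
    hermInner q (Fin.lastCases a x : Fin (n + 1) → F) (Fin.lastCases b y) =
      hermInner q x y + a * b ^ q := by
  simp [hermInner, Fin.sum_univ_castSucc]

lemma hermGram_lastCases_zero (A : Matrix ι (Fin n) F) :
    hermGram q (of fun i => Fin.lastCases 0 (A i)) = hermGram q A := by
  ext i j
  rw [hermGram_apply, hermGram_apply]
  exact (hermInner_lastCases q _ _ _ _).trans (by rw [zero_mul, add_zero])

lemma vecMul_hermGram_apply [Fintype ι] (A : Matrix ι (Fin n) F) (c : ι → F) (j : ι) :
    (c ᵥ* hermGram q A) j = hermInner q (c ᵥ* A) (A j) := by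
  simp only [vecMul, dotProduct, hermGram_apply, hermInner, sum_mul, mul_sum]
  rw [sum_comm]
  exact sum_congr rfl fun l _ => sum_congr rfl fun i _ => by ring

lemma det_hermGram_fromRows [Fintype ι] [DecidableEq ι] [Fintype κ] [DecidableEq κ]
    (A₁ : Matrix ι (Fin n) F) (A₂ : Matrix κ (Fin n) F)
    (h : ∀ i j, hermInner q (A₂ j) (A₁ i) = 0) :
    (hermGram q (fromRows A₁ A₂)).det = (hermGram q A₁).det * (hermGram q A₂).det := by
  have hblock : hermGram q (fromRows A₁ A₂) =
      fromBlocks (hermGram q A₁) (hermGram q (fromRows A₁ A₂)).toBlocks₁₂ 0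
        (hermGram q A₂) := by
    ext (i | i) (j | j)
    · rfl
    · rfl
    · exact (hermGram_apply q _ _ _).trans (h j i)
    · rfl
  rw [hblock, det_fromBlocks_zero₂₁]

lemma isHermLCD_of_det_hermGram_ne_zero [Fintype ι] [DecidableEq ι] (A : Matrix ι (Fin n) F)
    (h : (hermGram q A).det ≠ 0) : IsHermLCD q (Submodule.span F (Set.range A)) := by
  rw [IsHermLCD, Submodule.eq_bot_iff]
  rintro _ ⟨hvC, hvD⟩
  obtain ⟨c, rfl⟩ := (Submodule.mem_span_range_iff_exists_fun F).mp hvC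
  rw [← vecMul_eq_sum] at hvD ⊢
  have hc : c ᵥ* hermGram q A = 0 := funext fun j => by
    rw [vecMul_hermGram_apply]
    exact hvD _ (Submodule.subset_span ⟨j, rfl⟩)
  have hc₀ : c = 0 := by
    by_contra hc₀
    exact h (exists_vecMul_eq_zero_iff.mp ⟨c, hc₀, hc⟩)
  rw [hc₀, zero_vecMul]

end Gram

section ExpChar

variable (p e : ℕ) [ExpChar F p] {n : ℕ}

lemma mem_hermDual_span_iff {x : Fin n → F} {s : Set (Fin n → F)} :
    x ∈ hermDual (p ^ e) (Submodule.span F s) ↔ ∀ y ∈ s, hermInner (p ^ e) x y = 0 := by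
  refine ⟨fun h y hy => h y (Submodule.subset_span hy), fun h y hy => ?_⟩
  induction hy using Submodule.span_induction with
  | mem y hy => exact h y hy
  | zero => simp [hermInner, zero_pow (expChar_pow_pos F p e).ne']
  | add a b _ _ ha hb =>
    simp only [hermInner, Pi.add_apply, add_pow_expChar_pow, mul_add, sum_add_distrib] at ha hb ⊢
    rw [ha, hb, add_zero]
  | smul c a _ ha =>
    simp only [hermInner, Pi.smul_apply, smul_eq_mul, mul_pow, mul_left_comm (x _), ← mul_sum]
      at ha ⊢
    rw [ha, mul_zero]

lemma det_hermGram_ne_zero_of_isHermLCD {ι : Type*} [Fintype ι] [DecidableEq ι]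
    (A : Matrix ι (Fin n) F) (hA : LinearIndependent F A)
    (h : IsHermLCD (p ^ e) (Submodule.span F (Set.range A))) :
    (hermGram (p ^ e) A).det ≠ 0 := by
  intro hdet
  obtain ⟨c, hc, hcA⟩ := exists_vecMul_eq_zero_iff.mpr hdet
  have hv : c ᵥ* A ∈
      Submodule.span F (Set.range A) ⊓ hermDual (p ^ e) (Submodule.span F (Set.range A)) := by
    refine ⟨?_, (mem_hermDual_span_iff p e).mpr ?_⟩
    · exact (Submodule.mem_span_range_iff_exists_fun F).mpr ⟨c, (vecMul_eq_sum c A).symm⟩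
    · rintro _ ⟨j, rfl⟩
      rw [← vecMul_hermGram_apply, hcA, Pi.zero_apply]
  rw [h, Submodule.mem_bot, vecMul_eq_sum] at hv
  exact hc (funext (Fintype.linearIndependent_iff.mp hA c hv))

lemma hermInner_self_pow [Fintype F] (hF : Fintype.card F = (p ^ e) ^ 2) (x : Fin n → F) :
    hermInner (p ^ e) x x ^ p ^ e = hermInner (p ^ e) x x := by
  rw [hermInner, sum_pow_char_pow]
  refine sum_congr rfl fun i _ => ?_
  rw [mul_pow, ← pow_mul, ← sq, ← hF, FiniteField.pow_card, mul_comm]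

end ExpChar

lemma hermGram_of_pair {n : ℕ} (q : ℕ) (u v : Fin n → F) :
    hermGram q (of ![u, v]) =
      !![hermInner q u u, hermInner q u v; hermInner q v u, hermInner q v v] := by
  ext i j
  fin_cases i <;> fin_cases j <;> rfl

lemma det_hermGram_lastCases_one [CharP F 2] {n : ℕ} (q : ℕ) (x x' : Fin n → F)
    (hx : hermInner q x x = 1) (hx' : hermInner q x' x' = 1)
    (hxx' : hermInner q x x' = 0) (hx'x : hermInner q x' x = 0) :
    (hermGram q (of ![Fin.lastCases 1 x, Fin.lastCases 1 x'])).det = 1 := by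
  simp [hermGram_of_pair, det_fin_two_of, hermInner_lastCases, hx, hx', hxx', hx'x,
    CharTwo.add_self_eq_zero, CharTwo.neg_eq]

lemma hermInner_self_eq_one_of_ne_zero {n : ℕ} (x : Fin n → GaloisField 2 2)
    (hx : hermInner 2 x x ≠ 0) : hermInner 2 x x = 1 := by
  have : Fintype (GaloisField 2 2) := Fintype.ofFinite _
  have hcard : Fintype.card (GaloisField 2 2) = (2 ^ 1) ^ 2 := by
    rw [← Nat.card_eq_fintype_card, GaloisField.card 2 2 two_ne_zero]
    norm_num
  have hsq := hermInner_self_pow 2 1 hcard x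
  rw [pow_one] at hsq
  exact mul_left_cancel₀ hx (by rw [← sq, hsq, mul_one])

theorem stmt_9_general (n m : ℕ) (x x' : Fin n → GaloisField 2 2)
    (G₂ : Matrix (Fin (m + 1)) (Fin n) (GaloisField 2 2))
    (hx : hermInner 2 x x ≠ 0) (hx' : hermInner 2 x' x' ≠ 0)
    (hxx' : hermInner 2 x x' = 0) (hx'x : hermInner 2 x' x = 0)
    (hgx : ∀ i, hermInner 2 (G₂ i) x = 0)
    (hgx' : ∀ i, hermInner 2 (G₂ i) x' = 0)
    (hlcd2 : IsHermLCD 2 (Submodule.span (GaloisField 2 2) (Set.range G₂)))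
    (hdim2 : Module.finrank (GaloisField 2 2)
      (Submodule.span (GaloisField 2 2) (Set.range G₂)) = m + 1)
    (G : Matrix (Fin (m + 3)) (Fin (n + 1)) (GaloisField 2 2))
    (hG : ∀ i j, G i j = Fin.lastCases
      (if (i : ℕ) < 2 then (1 : GaloisField 2 2) else 0)
      (fun j' => (Fin.cases x (Fin.cases x' G₂) : Fin (m + 3) → Fin n → GaloisField 2 2) i j')
      j) :
    (G * (G.map (· ^ 2))ᵀ).det = (G₂ * (G₂.map (· ^ 2))ᵀ).det ∧
    (G * (G.map (· ^ 2))ᵀ).det ≠ 0 ∧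
    IsHermLCD 2 (Submodule.span (GaloisField 2 2) (Set.range G)) := by
  change (hermGram 2 G).det = (hermGram 2 G₂).det ∧ (hermGram 2 G).det ≠ 0 ∧ _
  let e : Fin 2 ⊕ Fin (m + 1) ≃ Fin (m + 3) := finSumFinEquiv.trans (finCongr (by omega))
  have hrows : G.submatrix e id = fromRows (of ![Fin.lastCases 1 x, Fin.lastCases 1 x'])
      (of fun i => Fin.lastCases 0 (G₂ i)) := by
    have he₀ : e (.inl 0) = 0 := Fin.ext (by simp [e])
    have he₁ : e (.inl 1) = 1 := Fin.ext (by simp [e])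
    have he₂ (b : Fin (m + 1)) : e (.inr b) = b.succ.succ := Fin.ext (by simp [e])
    ext (a | b) j
    · fin_cases a
      · simp [he₀, hG]
      · simp [he₁, hG]
        rfl
    · simp [he₂, hG]
      rfl
  have hdet : (hermGram 2 G).det = (hermGram 2 G₂).det := by
    rw [← det_submatrix_equiv_self e, ← hermGram_submatrix, hrows, det_hermGram_fromRows,
      det_hermGram_lastCases_one 2 x x' (hermInner_self_eq_one_of_ne_zero x hx)
        (hermInner_self_eq_one_of_ne_zero x' hx') hxx' hx'x, hermGram_lastCases_zero, one_mul]
    intro i j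
    fin_cases i
    · exact (hermInner_lastCases 2 _ _ _ _).trans (by simp [hgx])
    · exact (hermInner_lastCases 2 _ _ _ _).trans (by simp [hgx'])
  have hdet₂ : (hermGram 2 G₂).det ≠ 0 :=
    det_hermGram_ne_zero_of_isHermLCD 2 1 G₂
      (linearIndependent_iff_card_eq_finrank_span.mpr (by simp [Set.finrank, hdim2])) hlcd2
  exact ⟨hdet, hdet ▸ hdet₂, isHermLCD_of_det_hermGram_ne_zero 2 G (hdet ▸ hdet₂)⟩

/-- the dimension `k ≥ 3` is written as `k = m + 3` with the matrix `G₂`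
consisting of the `m + 1 = k - 2` rows `g₃, …, g_k`.  The full generator matrix has
rows `x, x', g₃, …, g_k`, and `G` is obtained by appending the column
`(1,1,0,…,0)ᵀ`. -/
theorem stmt_9 (n m : ℕ) (x x' : Fin n → GaloisField 2 2)
    (G₂ : Matrix (Fin (m + 1)) (Fin n) (GaloisField 2 2))
    (hx : hermInner 2 x x ≠ 0) (hx' : hermInner 2 x' x' ≠ 0)
    (hxx' : hermInner 2 x x' = 0) (hx'x : hermInner 2 x' x = 0)
    (hxg : ∀ i, hermInner 2 x (G₂ i) = 0) (hgx : ∀ i, hermInner 2 (G₂ i) x = 0)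
    (hx'g : ∀ i, hermInner 2 x' (G₂ i) = 0) (hgx' : ∀ i, hermInner 2 (G₂ i) x' = 0)
    (hli : LinearIndependent (GaloisField 2 2)
      (Fin.cases x (Fin.cases x' G₂) : Fin (m + 3) → Fin n → GaloisField 2 2))
    (hlcd2 : IsHermLCD 2 (Submodule.span (GaloisField 2 2) (Set.range G₂)))
    (hdim2 : Module.finrank (GaloisField 2 2)
      (Submodule.span (GaloisField 2 2) (Set.range G₂)) = m + 1)
    (G : Matrix (Fin (m + 3)) (Fin (n + 1)) (GaloisField 2 2))
    (hG : ∀ i j, G i j = Fin.lastCases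
      (if (i : ℕ) < 2 then (1 : GaloisField 2 2) else 0)
      (fun j' => (Fin.cases x (Fin.cases x' G₂) : Fin (m + 3) → Fin n → GaloisField 2 2) i j')
      j) :
    (G * (G.map (· ^ 2))ᵀ).det = (G₂ * (G₂.map (· ^ 2))ᵀ).det ∧
    (G * (G.map (· ^ 2))ᵀ).det ≠ 0 ∧
    IsHermLCD 2 (Submodule.span (GaloisField 2 2) (Set.range G)) :=
  stmt_9_general n m x x' G₂ hx hx' hxx' hx'x hgx hgx' hlcd2 hdim2 G hG
end

section
/- Define r_4(n,k,α) = 4^{k−1}·n − ((4^k − 1)/3)·α for positive integers n,k,α. Assume k ≥ 3, 4α − 3n ≥ 1, and 4·r_4(n,k,α) < k. If the statement 'there exists no quaternary Hermitian LCD [n,k,α] code with Hermitian dual distance ≥ 2' holds (as in Theorem 9 of Araya–Harada–Saito), then there exists no quaternary Hermitian LCD [n,k,α] code at all (with any Hermitian dual distance). -/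
open Finset Matrix

/-- `r₄(n,k,α) = 4^(k-1)·n - ((4^k - 1)/3)·α`, as an integer (the division is exact). -/
def r4 (n k α : ℕ) : ℤ := 4 ^ (k - 1) * (n : ℤ) - ((4 ^ k - 1) / 3) * (α : ℤ)

/-!
A weight-one vector of `C^{⊥h}` supported at `i₀` forces every codeword to vanish at `i₀`.
Counting the nonzero entries of all codewords of a `k`-dimensional code over `F_q` column by
column, each of the remaining `n - 1` columns is nonzero on at most `q^k - q^(k-1)` codewords,
while each of the `q^k - 1` nonzero codewords has weight at least `α`. For `q = 4` this gives
`r₄(n,k,α) ≥ 4^(k-1)`, hence `4 r₄(n,k,α) ≥ 4^k > k`.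
-/

section DualDistance

variable {F : Type*} [Field F] {q n : ℕ} {C : Submodule F (Fin n → F)}

lemma wt_pos {x : Fin n → F} (hx : x ≠ 0) : 0 < wt x := by
  obtain ⟨i, hi⟩ := Function.ne_iff.mp hx
  have : Nonempty {j // x j ≠ 0} := ⟨⟨i, hi⟩⟩
  exact Nat.card_pos

lemma dualDistOne_of_not_dualDistGeTwo (h : ¬ dualDistGeTwo q C) : dualDistOne q C := by
  simp only [dualDistGeTwo, not_forall, not_le] at h
  obtain ⟨x, hx, hx0, hlt⟩ := h
  exact ⟨x, hx, by have := wt_pos hx0; omega⟩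

lemma exists_forall_apply_eq_zero_of_dualDistOne (h : dualDistOne q C) :
    ∃ i, ∀ y ∈ C, y i = 0 := by
  obtain ⟨x, hx, hwt⟩ := h
  obtain ⟨⟨i, hi⟩, huniq⟩ := Nat.card_eq_one_iff_exists.mp hwt
  have hsupp : ∀ j, j ≠ i → x j = 0 := fun j hj => by
    by_contra hxj
    exact hj (congrArg Subtype.val (huniq ⟨j, hxj⟩))
  refine ⟨i, fun y hy => ?_⟩
  have hinner : x i * y i ^ q = 0 := by
    rw [← hx y hy, hermInner, Finset.sum_eq_single i
      (fun j _ hj => by rw [hsupp j hj, zero_mul]) (fun hi' => absurd (mem_univ i) hi')]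
  exact eq_zero_of_pow_eq_zero ((mul_eq_zero.mp hinner).resolve_left hi)

end DualDistance

section Counting

variable {F : Type*} [Field F] [DecidableEq F] {n k : ℕ} {C : Submodule F (Fin n → F)}

lemma sum_wt_eq_sum_card_filter [Fintype C] :
    ∑ c : C, wt (c : Fin n → F) = ∑ i, #{c : C | (c : Fin n → F) i ≠ 0} := by
  simp_rw [wt, Nat.card_eq_fintype_card, Fintype.card_subtype, card_filter]
  exact sum_comm

variable [Fintype F]

lemma card_pow_sub_one_mul_le_sum_wt [Fintype C] (hdim : Module.finrank F C = k) {α : ℕ}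
    (hmin : ∀ c ∈ C, c ≠ 0 → α ≤ wt c) :
    (Fintype.card F ^ k - 1) * α ≤ ∑ c : C, wt (c : Fin n → F) := by
  have hcard : Fintype.card C = Fintype.card F ^ k := by
    rw [Module.card_eq_pow_finrank (K := F), hdim]
  calc (Fintype.card F ^ k - 1) * α = ∑ _c ∈ univ.erase (0 : C), α := by
        rw [sum_const, card_erase_of_mem (mem_univ _), card_univ, hcard, smul_eq_mul]
    _ ≤ ∑ c ∈ univ.erase (0 : C), wt (c : Fin n → F) :=
        sum_le_sum fun c hc => hmin c c.2 fun h0 => ne_of_mem_erase hc (Subtype.ext h0)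
    _ ≤ ∑ c : C, wt (c : Fin n → F) := sum_le_sum_of_subset (erase_subset _ _)

lemma card_filter_apply_ne_zero_le [Fintype C] (hk : 1 ≤ k) (hdim : Module.finrank F C = k)
    (i : Fin n) :
    #{c : C | (c : Fin n → F) i ≠ 0} ≤ Fintype.card F ^ k - Fintype.card F ^ (k - 1) := by
  classical
  let φ : C →ₗ[F] F := (LinearMap.proj i).comp C.subtype
  have hker_card : Fintype.card (LinearMap.ker φ) = #{c : C | (c : Fin n → F) i = 0} := by
    rw [← Fintype.card_subtype]
    exact Fintype.card_congr (Equiv.subtypeEquivRight fun c => by simp [φ])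
  have hker : Fintype.card F ^ (k - 1) ≤ Fintype.card (LinearMap.ker φ) := by
    rw [Module.card_eq_pow_finrank (K := F) (V := LinearMap.ker φ)]
    refine Nat.pow_le_pow_right (Fintype.card_pos (α := F)) ?_
    have hrange : Module.finrank F (LinearMap.range φ) ≤ 1 := by
      simpa using Submodule.finrank_le (LinearMap.range φ)
    have := LinearMap.finrank_range_add_finrank_ker φ
    omega
  have hsplit := card_filter_add_card_filter_not (s := (univ : Finset C))
    (p := fun c : C => (c : Fin n → F) i = 0)
  rw [card_univ, Module.card_eq_pow_finrank (K := F), hdim] at hsplit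
  simp only [ne_eq]
  omega

theorem card_pow_sub_one_mul_le_of_forall_apply_eq_zero (hk : 1 ≤ k)
    (hdim : Module.finrank F C = k) {α : ℕ} (hmin : ∀ c ∈ C, c ≠ 0 → α ≤ wt c)
    {i₀ : Fin n} (hz : ∀ y ∈ C, y i₀ = 0) :
    (Fintype.card F ^ k - 1) * α ≤
      (Fintype.card F ^ k - Fintype.card F ^ (k - 1)) * (n - 1) := by
  let _ : Fintype C := Fintype.ofFinite C
  have hi₀ : #{c : C | (c : Fin n → F) i₀ ≠ 0} = 0 :=
    card_eq_zero.mpr (filter_eq_empty_iff.mpr fun c _ => not_not.mpr (hz c c.2))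
  calc (Fintype.card F ^ k - 1) * α ≤ ∑ c : C, wt (c : Fin n → F) :=
        card_pow_sub_one_mul_le_sum_wt hdim hmin
    _ = ∑ i ∈ univ.erase i₀, #{c : C | (c : Fin n → F) i ≠ 0} := by
        rw [sum_wt_eq_sum_card_filter]
        exact (sum_erase univ (f := fun i => #{c : C | (c : Fin n → F) i ≠ 0}) hi₀).symm
    _ ≤ ∑ _i ∈ univ.erase i₀, (Fintype.card F ^ k - Fintype.card F ^ (k - 1)) :=
        sum_le_sum fun i _ => card_filter_apply_ne_zero_le hk hdim i
    _ = (Fintype.card F ^ k - Fintype.card F ^ (k - 1)) * (n - 1) := by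
        rw [sum_const, card_erase_of_mem (mem_univ _), card_univ, Fintype.card_fin,
          smul_eq_mul, mul_comm]

end Counting

lemma pow_le_r4 {n k α : ℕ} (hk : 1 ≤ k) (hn : 1 ≤ n)
    (h : (4 ^ k - 1) * α ≤ (4 ^ k - 4 ^ (k - 1)) * (n - 1)) : 4 ^ (k - 1) ≤ r4 n k α := by
  obtain ⟨m, rfl⟩ : ∃ m, k = m + 1 := ⟨k - 1, by omega⟩
  obtain ⟨D, hD⟩ : (3 : ℤ) ∣ 4 ^ (m + 1) - 1 := by
    simpa using sub_dvd_pow_sub_pow (4 : ℤ) 1 (m + 1)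
  have hle : 4 ^ m ≤ 4 ^ (m + 1) := Nat.pow_le_pow_right (by norm_num) m.le_succ
  rw [Nat.add_sub_cancel] at h
  zify [hle, Nat.one_le_pow (m + 1) 4 (by norm_num), hn] at h
  rw [hD, pow_succ] at h
  simp only [r4, Nat.add_sub_cancel, hD, Int.mul_ediv_cancel_left _ three_ne_zero]
  nlinarith

theorem stmt_14_general (n k α : ℕ) (hk : 3 ≤ k)
    (hr : 4 * r4 n k α < (k : ℤ))
    (h : ¬ ∃ C : Submodule (GaloisField 2 2) (Fin n → GaloisField 2 2),
      Module.finrank (GaloisField 2 2) C = k ∧ IsHermLCD 2 C ∧ minWt C α ∧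
      dualDistGeTwo 2 C) :
    ¬ ∃ C : Submodule (GaloisField 2 2) (Fin n → GaloisField 2 2),
      Module.finrank (GaloisField 2 2) C = k ∧ IsHermLCD 2 C ∧ minWt C α := by
  classical
  let _ : Fintype (GaloisField 2 2) := Fintype.ofFinite _
  rintro ⟨C, hdim, hlcd, hmin⟩
  by_cases hdual : dualDistGeTwo 2 C
  · exact h ⟨C, hdim, hlcd, hmin, hdual⟩
  obtain ⟨i₀, hz⟩ :=
    exists_forall_apply_eq_zero_of_dualDistOne (dualDistOne_of_not_dualDistGeTwo hdual)
  have hq : Fintype.card (GaloisField 2 2) = 4 := by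
    rw [← Nat.card_eq_fintype_card, GaloisField.card 2 2 (by norm_num)]
    norm_num
  have hcount := card_pow_sub_one_mul_le_of_forall_apply_eq_zero (by omega) hdim hmin.2 hz
  rw [hq] at hcount
  have hr4 : (4 : ℤ) ^ (k - 1) ≤ r4 n k α := by
    exact_mod_cast pow_le_r4 (by omega) i₀.pos hcount
  have hk4 : (k : ℤ) < 4 ^ k := by exact_mod_cast Nat.lt_pow_self (by norm_num)
  have hpow : (4 : ℤ) ^ k = 4 * 4 ^ (k - 1) := by
    rw [← pow_succ', Nat.sub_add_cancel (by omega)]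
  omega

theorem stmt_14 (n k α : ℕ) (hn : 1 ≤ n) (hα : 1 ≤ α) (hk : 3 ≤ k)
    (hna : 1 ≤ 4 * (α : ℤ) - 3 * (n : ℤ)) (hr : 4 * r4 n k α < (k : ℤ))
    (h : ¬ ∃ C : Submodule (GaloisField 2 2) (Fin n → GaloisField 2 2),
      Module.finrank (GaloisField 2 2) C = k ∧ IsHermLCD 2 C ∧ minWt C α ∧
      dualDistGeTwo 2 C) :
    ¬ ∃ C : Submodule (GaloisField 2 2) (Fin n → GaloisField 2 2),
      Module.finrank (GaloisField 2 2) C = k ∧ IsHermLCD 2 C ∧ minWt C α :=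
  stmt_14_general n k α hk hr h
end
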